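/- arXiv:1507.07394 — 2 statements merged into one kernel-verified Lean document; each statement's English description precedes it below -/
import Mathlib

section
/- (Theorem 1 of the paper, panel independence conclusion.) Let m ≥ 1 and let θ₁, …, θ_m, I₀, I₁₁, …, I_mm, I₊ be random variables on a common probability space, each taking values in a standard Borel space. Write θ_{i⁻} for the tuple (θ_j)_{j≠i} and I_* for the tuple (I₁₁, …, I_mm), and suppose I₀ and I_* are both measurable with respect to σ(I₊). Assume: (delegable) I₊ is conditionally independent of (θ₁, …, θ_m) given (I₀, I_*); for each i ∈ {1,…,m}: (separately informed) I_{ii} is conditionally independent of θ_{i⁻} given (I₀, θ_i); (cutting) I_* is conditionally independent of θ_i given (I₀, I_{ii}, θ_{i⁻}); and (commonly separated) θ_i is conditionally independent of θ_{i⁻} given I₀. Then for each i ∈ {1,…,m}, θ_i is conditionally independent of θ_{i⁻} given I₊. -/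
open MeasureTheory ProbabilityTheory MeasurableSpace
/-- If `A ⫫ B | W` (expressed via the product rule for conditional probabilities), then
conditioning on `W ⊔ A` gives the same conditional probability of a `B`-measurable set
as conditioning on `W` alone. -/
theorem aux_ce_of_ci {Ω : Type*} {W A B : MeasurableSpace Ω} {mΩ : MeasurableSpace Ω}
    {μ : Measure Ω} [IsFiniteMeasure μ]
    (hW : W ≤ mΩ) (hA : A ≤ mΩ) (hB : B ≤ mΩ)
    (h : ∀ a b : Set Ω, MeasurableSet[A] a → MeasurableSet[B] b →
      (μ⟦a ∩ b|W⟧) =ᵐ[μ] (μ⟦a|W⟧) * μ⟦b|W⟧)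
    {b : Set Ω} (hb : MeasurableSet[B] b) :
    (μ⟦b|W ⊔ A⟧) =ᵐ[μ] μ⟦b|W⟧ := by
  have hWA : W ⊔ A ≤ mΩ := sup_le hW hA
  have hbΩ : MeasurableSet b := hB _ hb
  set f : Ω → ℝ := b.indicator (fun _ => (1:ℝ)) with hf_def
  have hf_int : Integrable f μ := (integrable_const 1).indicator hbΩ
  set g : Ω → ℝ := μ[f|W] with hg_def
  have hg_int : Integrable g μ := integrable_condExp
  have hgen : (W ⊔ A) = MeasurableSpace.generateFrom
      {s : Set Ω | ∃ w a, MeasurableSet[W] w ∧ MeasurableSet[A] a ∧ s = w ∩ a} := by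
    refine le_antisymm (sup_le ?_ ?_) (MeasurableSpace.generateFrom_le ?_)
    · intro s hs
      exact MeasurableSpace.measurableSet_generateFrom
        ⟨s, Set.univ, hs, MeasurableSet.univ, (Set.inter_univ s).symm⟩
    · intro s hs
      exact MeasurableSpace.measurableSet_generateFrom
        ⟨Set.univ, s, MeasurableSet.univ, hs, (Set.univ_inter s).symm⟩
    · rintro s ⟨w, a, hw, ha, rfl⟩
      exact ((le_sup_left : W ≤ W ⊔ A) _ hw).inter ((le_sup_right : A ≤ W ⊔ A) _ ha)
  have hpi : IsPiSystem
      {s : Set Ω | ∃ w a, MeasurableSet[W] w ∧ MeasurableSet[A] a ∧ s = w ∩ a} := by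
    rintro s ⟨w1, a1, hw1, ha1, rfl⟩ t ⟨w2, a2, hw2, ha2, rfl⟩ -
    exact ⟨w1 ∩ w2, a1 ∩ a2, hw1.inter hw2, ha1.inter ha2, by
      rw [Set.inter_inter_inter_comm]⟩
  have key : ∀ s : Set Ω, MeasurableSet[W ⊔ A] s →
      ∫ x in s, g x ∂μ = ∫ x in s, f x ∂μ := by
    refine fun s hs => MeasurableSpace.induction_on_inter
      (C := fun s _ => ∫ x in s, g x ∂μ = ∫ x in s, f x ∂μ) hgen hpi (by simp)
      ?_ ?_ ?_ s hs
    · rintro t ⟨w, a, hw, ha, rfl⟩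
      have hwΩ : MeasurableSet w := hW _ hw
      have haΩ : MeasurableSet a := hA _ ha
      have inda_int : Integrable (a.indicator fun _ => (1:ℝ)) μ :=
        (integrable_const 1).indicator haΩ
      have bnd : ∀ x, ‖a.indicator (fun _ => (1:ℝ)) x‖ ≤ 1 := by
        intro x; by_cases hx : x ∈ a <;> simp [Set.indicator_apply, hx]
      have hga_int : Integrable (g * a.indicator fun _ => (1:ℝ)) μ := by
        have h1 := hg_int.bdd_mul inda_int.aestronglyMeasurable (Filter.Eventually.of_forall bnd)
        exact h1.congr (Filter.Eventually.of_forall fun x => mul_comm _ _)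
      have pull : μ[g * a.indicator (fun _ => (1:ℝ))|W] =ᵐ[μ] g * μ⟦a|W⟧ :=
        condExp_mul_of_stronglyMeasurable_left stronglyMeasurable_condExp hga_int inda_int
      have L : ∫ x in w ∩ a, g x ∂μ = ∫ x in w, (μ⟦a|W⟧ * g) x ∂μ := by
        rw [← setIntegral_indicator haΩ]
        have e1 : ∫ x in w, a.indicator g x ∂μ
            = ∫ x in w, (g * a.indicator fun _ => (1:ℝ)) x ∂μ :=
          setIntegral_congr_ae hwΩ (Filter.Eventually.of_forall fun x _ => by
            by_cases hx : x ∈ a <;> simp [Set.indicator_apply, hx])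
        rw [e1, ← setIntegral_condExp hW hga_int hw]
        refine setIntegral_congr_ae hwΩ (pull.mono fun x hx _ => ?_)
        rw [hx, Pi.mul_apply, Pi.mul_apply, mul_comm]
      have hab_ind : a.indicator f = (a ∩ b).indicator (fun _ => (1:ℝ)) :=
        Set.indicator_indicator a b _
      have hab_int : Integrable ((a ∩ b).indicator fun _ => (1:ℝ)) μ :=
        (integrable_const 1).indicator (haΩ.inter hbΩ)
      have R : ∫ x in w ∩ a, f x ∂μ = ∫ x in w, (μ⟦a|W⟧ * g) x ∂μ := by
        rw [← setIntegral_indicator haΩ]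
        calc ∫ x in w, a.indicator f x ∂μ
            = ∫ x in w, (a ∩ b).indicator (fun _ => (1:ℝ)) x ∂μ := by rw [hab_ind]
          _ = ∫ x in w, (μ⟦a ∩ b|W⟧) x ∂μ := (setIntegral_condExp hW hab_int hw).symm
          _ = ∫ x in w, (μ⟦a|W⟧ * g) x ∂μ :=
              setIntegral_congr_ae hwΩ ((h a b ha hb).mono fun x hx _ => hx)
      rw [L, R]
    · intro t ht hteq
      have htΩ : MeasurableSet t := hWA _ ht
      have e1 := integral_add_compl htΩ hg_int
      have e2 := integral_add_compl htΩ hf_int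
      have e3 : ∫ x, g x ∂μ = ∫ x, f x ∂μ := integral_condExp hW
      linarith
    · intro t hd htm hteq
      have htΩ : ∀ n, MeasurableSet (t n) := fun n => hWA _ (htm n)
      rw [integral_iUnion htΩ hd hg_int.integrableOn,
        integral_iUnion htΩ hd hf_int.integrableOn]
      exact tsum_congr hteq
  exact (ae_eq_condExp_of_forall_setIntegral_eq hWA hf_int
    (fun s _ _ => hg_int.integrableOn) (fun s hs _ => key s hs)
    (StronglyMeasurable.aestronglyMeasurable (stronglyMeasurable_condExp.mono (le_sup_left : W ≤ W ⊔ A)))).symm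

/-- Converse: if conditioning on `W ⊔ A` gives the same conditional probability of
`B`-measurable sets as conditioning on `W`, then `A ⫫ B | W` (product rule). -/
theorem aux_ci_of_ce {Ω : Type*} {W A B : MeasurableSpace Ω} {mΩ : MeasurableSpace Ω}
    {μ : Measure Ω} [IsFiniteMeasure μ]
    (hW : W ≤ mΩ) (hA : A ≤ mΩ) (hB : B ≤ mΩ)
    (h : ∀ b : Set Ω, MeasurableSet[B] b → (μ⟦b|W ⊔ A⟧) =ᵐ[μ] μ⟦b|W⟧)
    {a b : Set Ω} (ha : MeasurableSet[A] a) (hb : MeasurableSet[B] b) :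
    (μ⟦a ∩ b|W⟧) =ᵐ[μ] (μ⟦a|W⟧) * μ⟦b|W⟧ := by
  have hWA : W ⊔ A ≤ mΩ := sup_le hW hA
  have haΩ : MeasurableSet a := hA _ ha
  have hbΩ : MeasurableSet b := hB _ hb
  have inda_int : Integrable (a.indicator fun _ => (1:ℝ)) μ :=
    (integrable_const 1).indicator haΩ
  have indb_int : Integrable (b.indicator fun _ => (1:ℝ)) μ :=
    (integrable_const 1).indicator hbΩ
  have bnd : ∀ x, ‖a.indicator (fun _ => (1:ℝ)) x‖ ≤ 1 := fun x => by
    by_cases hx : x ∈ a <;> simp [Set.indicator_apply, hx]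
  have hmul : (a ∩ b).indicator (fun _ => (1:ℝ)) =
      a.indicator (fun _ => (1:ℝ)) * b.indicator (fun _ => (1:ℝ)) := by
    funext x
    by_cases hxa : x ∈ a <;> by_cases hxb : x ∈ b <;>
      simp [Set.indicator_apply, hxa, hxb]
  have sm_a : StronglyMeasurable[W ⊔ A] (a.indicator fun _ => (1:ℝ)) :=
    stronglyMeasurable_const.indicator ((le_sup_right : A ≤ W ⊔ A) _ ha)
  have hmul_int : Integrable (a.indicator (fun _ => (1:ℝ)) * b.indicator fun _ => (1:ℝ)) μ :=
    indb_int.bdd_mul inda_int.aestronglyMeasurable (Filter.Eventually.of_forall bnd)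
  have step2a : μ[(a ∩ b).indicator (fun _ => (1:ℝ))|W ⊔ A] =ᵐ[μ]
      a.indicator (fun _ => (1:ℝ)) * μ⟦b|W ⊔ A⟧ := by
    rw [hmul]
    exact condExp_mul_of_stronglyMeasurable_left sm_a hmul_int indb_int
  have step2 : μ[(a ∩ b).indicator (fun _ => (1:ℝ))|W ⊔ A] =ᵐ[μ]
      a.indicator (fun _ => (1:ℝ)) * μ⟦b|W⟧ :=
    step2a.trans ((h b hb).mono fun x hx => by
      simp only [Pi.mul_apply]; rw [hx])
  have hmix_int : Integrable (a.indicator (fun _ => (1:ℝ)) * μ⟦b|W⟧) μ :=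
    integrable_condExp.bdd_mul inda_int.aestronglyMeasurable (Filter.Eventually.of_forall bnd)
  have step3 : μ[a.indicator (fun _ => (1:ℝ)) * μ⟦b|W⟧|W] =ᵐ[μ] (μ⟦a|W⟧) * μ⟦b|W⟧ := by
    have hcomm : a.indicator (fun _ => (1:ℝ)) * μ⟦b|W⟧
        = μ⟦b|W⟧ * a.indicator (fun _ => (1:ℝ)) := mul_comm _ _
    rw [hcomm]
    have hpull := condExp_mul_of_stronglyMeasurable_left (m := W) stronglyMeasurable_condExp
      (hcomm ▸ hmix_int) inda_int
    exact hpull.trans (Filter.Eventually.of_forall fun x => by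
      simp only [Pi.mul_apply]; ring)
  calc (μ⟦a ∩ b|W⟧) =ᵐ[μ] μ[μ[(a ∩ b).indicator (fun _ => (1:ℝ))|W ⊔ A]|W] :=
        (condExp_condExp_of_le le_sup_left hWA).symm
    _ =ᵐ[μ] μ[a.indicator (fun _ => (1:ℝ)) * μ⟦b|W⟧|W] := condExp_congr_ae step2
    _ =ᵐ[μ] (μ⟦a|W⟧) * μ⟦b|W⟧ := step3


/-- **Theorem 1 of the paper (panel independence conclusion).**
Let `θ 1, …, θ m` be the panel parameter vectors, `I0` the common admissible evidence,
`Iii i` the evidence panel `i` uses for `θ i`, `Istar = (Iii 1, …, Iii m)` and `Iplus` the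
totality of admissible evidence, with `I0` and `Istar` measurable with respect to `σ(Iplus)`.
If the IDSS is delegable, separately informed, cutting and commonly separated, then for each
panel `i`, `θ i` is conditionally independent of `(θ j)_{j ≠ i}` given `Iplus`. -/
theorem stmt5_theorem1_panel_independence
    {Ω : Type*} [MeasurableSpace Ω] [StandardBorelSpace Ω] [Nonempty Ω]
    (μ : Measure Ω) [IsProbabilityMeasure μ]
    {m : ℕ} (hm : 1 ≤ m)
    {α : Fin m → Type*} [∀ i, MeasurableSpace (α i)] [∀ i, StandardBorelSpace (α i)]
    {β : Type*} [MeasurableSpace β] [StandardBorelSpace β]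
    {γ : Fin m → Type*} [∀ i, MeasurableSpace (γ i)] [∀ i, StandardBorelSpace (γ i)]
    {δ : Type*} [MeasurableSpace δ] [StandardBorelSpace δ]
    {θ : ∀ i, Ω → α i} {I0 : Ω → β} {Iii : ∀ i, Ω → γ i} {Iplus : Ω → δ}
    (hθ : ∀ i, Measurable (θ i)) (hI0 : Measurable I0)
    (hIii : ∀ i, Measurable (Iii i)) (hIplus : Measurable Iplus)
    -- `I0` and `Istar = (Iii i)_{i}` are measurable with respect to `σ(Iplus)`
    (hI0_le : MeasurableSpace.comap I0 inferInstance ≤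
      MeasurableSpace.comap Iplus inferInstance)
    (hIstar_le : MeasurableSpace.comap (fun ω (i : Fin m) => Iii i ω) inferInstance ≤
      MeasurableSpace.comap Iplus inferInstance)
    -- delegable: `Iplus ⫫ (θ 1, …, θ m) | (I0, Istar)`
    (delegable : CondIndepFun
        (MeasurableSpace.comap I0 inferInstance ⊔
          MeasurableSpace.comap (fun ω (i : Fin m) => Iii i ω) inferInstance)
        (sup_le hI0.comap_le
          (measurable_pi_lambda _ fun i => hIii i).comap_le)
        Iplus (fun ω (i : Fin m) => θ i ω) μ)
    -- separately informed: `Iii i ⫫ θ_{i⁻} | (I0, θ i)`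
    (sepInf : ∀ i, CondIndepFun
        (MeasurableSpace.comap I0 inferInstance ⊔
          MeasurableSpace.comap (θ i) inferInstance)
        (sup_le hI0.comap_le (hθ i).comap_le)
        (Iii i) (fun ω (j : {j : Fin m // j ≠ i}) => θ j.1 ω) μ)
    -- cutting: `Istar ⫫ θ i | (I0, Iii i, θ_{i⁻})`
    (cutting : ∀ i, CondIndepFun
        (MeasurableSpace.comap I0 inferInstance ⊔
          MeasurableSpace.comap (Iii i) inferInstance ⊔
          MeasurableSpace.comap (fun ω (j : {j : Fin m // j ≠ i}) => θ j.1 ω) inferInstance)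
        (sup_le (sup_le hI0.comap_le (hIii i).comap_le)
          (measurable_pi_lambda _ fun j => hθ j.1).comap_le)
        (fun ω (i : Fin m) => Iii i ω) (θ i) μ)
    -- commonly separated: `θ i ⫫ θ_{i⁻} | I0`
    (commonSep : ∀ i, CondIndepFun
        (MeasurableSpace.comap I0 inferInstance) hI0.comap_le
        (θ i) (fun ω (j : {j : Fin m // j ≠ i}) => θ j.1 ω) μ) :
    ∀ i, CondIndepFun
        (MeasurableSpace.comap Iplus inferInstance) hIplus.comap_le
        (θ i) (fun ω (j : {j : Fin m // j ≠ i}) => θ j.1 ω) μ := by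
  intro i
  have hθfull : Measurable (fun ω (j : Fin m) => θ j ω) :=
    measurable_pi_lambda _ fun j => hθ j
  have hθminus : Measurable (fun ω (j : {j : Fin m // j ≠ i}) => θ j.1 ω) :=
    measurable_pi_lambda _ fun j => hθ j.1
  have hIstar : Measurable (fun ω (j : Fin m) => Iii j ω) :=
    measurable_pi_lambda _ fun j => hIii j
  set mI0 : MeasurableSpace Ω := MeasurableSpace.comap I0 inferInstance with hmI0
  set mIs : MeasurableSpace Ω :=
    MeasurableSpace.comap (fun ω (j : Fin m) => Iii j ω) inferInstance with hmIs
  set mIp : MeasurableSpace Ω := MeasurableSpace.comap Iplus inferInstance with hmIp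
  set mIi : MeasurableSpace Ω := MeasurableSpace.comap (Iii i) inferInstance with hmIi
  set mTi : MeasurableSpace Ω := MeasurableSpace.comap (θ i) inferInstance with hmTi
  set mTn : MeasurableSpace Ω :=
    MeasurableSpace.comap (fun ω (j : {j : Fin m // j ≠ i}) => θ j.1 ω) inferInstance with hmTn
  set mT : MeasurableSpace Ω :=
    MeasurableSpace.comap (fun ω (j : Fin m) => θ j ω) inferInstance with hmT
  have hI0' : mI0 ≤ _ := hI0.comap_le
  have hIs' : mIs ≤ _ := hIstar.comap_le
  have hIp' : mIp ≤ _ := hIplus.comap_le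
  have hIi' : mIi ≤ _ := (hIii i).comap_le
  have hTi' : mTi ≤ _ := (hθ i).comap_le
  have hTn' : mTn ≤ _ := hθminus.comap_le
  have hT' : mT ≤ _ := hθfull.comap_le
  -- inclusions between the comap σ-algebras
  have hIi_le : mIi ≤ mIs := by
    have h := MeasurableSpace.comap_mono (g := fun ω (j : Fin m) => Iii j ω)
      (measurable_pi_apply (X := γ) i).comap_le
    rw [MeasurableSpace.comap_comp] at h
    exact h
  have hTi_le : mTi ≤ mT := by
    have h := MeasurableSpace.comap_mono (g := fun ω (j : Fin m) => θ j ω)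
      (measurable_pi_apply (X := α) i).comap_le
    rw [MeasurableSpace.comap_comp] at h
    exact h
  have hTn_le : mTn ≤ mT := by
    have hproj : Measurable (fun (f : ∀ j, α j) (j : {j : Fin m // j ≠ i}) => f j.1) :=
      measurable_pi_lambda _ fun j => measurable_pi_apply j.1
    have h := MeasurableSpace.comap_mono (g := fun ω (j : Fin m) => θ j ω) hproj.comap_le
    rw [MeasurableSpace.comap_comp] at h
    exact h
  -- product rules extracted from the hypotheses
  have prodDel : ∀ s t, MeasurableSet[mIp] s → MeasurableSet[mT] t →
      (μ⟦s ∩ t|mI0 ⊔ mIs⟧) =ᵐ[μ] (μ⟦s|mI0 ⊔ mIs⟧) * μ⟦t|mI0 ⊔ mIs⟧ :=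
    (condIndep_iff _ _ _ _ hIp' hT' μ).mp
      ((condIndepFun_iff_condIndep _ _ _ _ μ).mp delegable)
  have prodCS : ∀ s t, MeasurableSet[mTi] s → MeasurableSet[mTn] t →
      (μ⟦s ∩ t|mI0⟧) =ᵐ[μ] (μ⟦s|mI0⟧) * μ⟦t|mI0⟧ :=
    (condIndep_iff _ _ _ _ hTi' hTn' μ).mp
      ((condIndepFun_iff_condIndep _ _ _ _ μ).mp (commonSep i))
  have prodSI : ∀ s t, MeasurableSet[mIi] s → MeasurableSet[mTn] t →
      (μ⟦s ∩ t|mI0 ⊔ mTi⟧) =ᵐ[μ] (μ⟦s|mI0 ⊔ mTi⟧) * μ⟦t|mI0 ⊔ mTi⟧ :=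
    (condIndep_iff _ _ _ _ hIi' hTn' μ).mp
      ((condIndepFun_iff_condIndep _ _ _ _ μ).mp (sepInf i))
  have prodCut : ∀ s t, MeasurableSet[mIs] s → MeasurableSet[mTi] t →
      (μ⟦s ∩ t|mI0 ⊔ mIi ⊔ mTn⟧) =ᵐ[μ]
        (μ⟦s|mI0 ⊔ mIi ⊔ mTn⟧) * μ⟦t|mI0 ⊔ mIi ⊔ mTn⟧ :=
    (condIndep_iff _ _ _ _ hIs' hTi' μ).mp
      ((condIndepFun_iff_condIndep _ _ _ _ μ).mp (cutting i))
  -- Step 1 & 2: commonly separated + separately informed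
  have ce1 : ∀ b, MeasurableSet[mTn] b → (μ⟦b|mI0 ⊔ mTi⟧) =ᵐ[μ] μ⟦b|mI0⟧ :=
    fun b hb => aux_ce_of_ci hI0' hTi' hTn' prodCS hb
  have ce2 : ∀ b, MeasurableSet[mTn] b → (μ⟦b|mI0 ⊔ mTi ⊔ mIi⟧) =ᵐ[μ] μ⟦b|mI0⟧ :=
    fun b hb => (aux_ce_of_ci (sup_le hI0' hTi') hIi' hTn' prodSI hb).trans (ce1 b hb)
  -- Step 3: contraction + weak union
  have ce3 : ∀ b, MeasurableSet[mTn] b →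
      (μ⟦b|(mI0 ⊔ mIi) ⊔ mTi⟧) =ᵐ[μ] μ⟦b|mI0 ⊔ mIi⟧ := by
    intro b hb
    have hEq : (mI0 ⊔ mIi) ⊔ mTi = mI0 ⊔ mTi ⊔ mIi := sup_right_comm _ _ _
    have h1 : (μ⟦b|(mI0 ⊔ mIi) ⊔ mTi⟧) =ᵐ[μ] μ⟦b|mI0⟧ := by
      rw [hEq]; exact ce2 b hb
    have ht := condExp_condExp_of_le (le_sup_left : mI0 ⊔ mIi ≤ (mI0 ⊔ mIi) ⊔ mTi)
      (sup_le (sup_le hI0' hIi') hTi') (f := b.indicator fun _ => (1:ℝ)) (μ := μ)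
    have h2 : (μ⟦b|mI0 ⊔ mIi⟧) =ᵐ[μ] μ⟦b|mI0⟧ :=
      calc (μ⟦b|mI0 ⊔ mIi⟧)
          =ᵐ[μ] μ[μ⟦b|(mI0 ⊔ mIi) ⊔ mTi⟧|mI0 ⊔ mIi] := ht.symm
        _ =ᵐ[μ] μ[μ⟦b|mI0⟧|mI0 ⊔ mIi] := condExp_congr_ae h1
        _ =ᵐ[μ] μ⟦b|mI0⟧ := by
            rw [condExp_of_stronglyMeasurable (sup_le hI0' hIi')
              (stronglyMeasurable_condExp.mono le_sup_left) integrable_condExp]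
    exact h1.trans h2.symm
  -- symmetric form of step 3
  have prod3' : ∀ a b, MeasurableSet[mTn] a → MeasurableSet[mTi] b →
      (μ⟦a ∩ b|mI0 ⊔ mIi⟧) =ᵐ[μ] (μ⟦a|mI0 ⊔ mIi⟧) * μ⟦b|mI0 ⊔ mIi⟧ := by
    intro a b ha hb
    calc (μ⟦a ∩ b|mI0 ⊔ mIi⟧) = μ⟦b ∩ a|mI0 ⊔ mIi⟧ := by rw [Set.inter_comm]
      _ =ᵐ[μ] (μ⟦b|mI0 ⊔ mIi⟧) * μ⟦a|mI0 ⊔ mIi⟧ :=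
          aux_ci_of_ce (sup_le hI0' hIi') hTi' hTn' ce3 hb ha
      _ = (μ⟦a|mI0 ⊔ mIi⟧) * μ⟦b|mI0 ⊔ mIi⟧ := mul_comm _ _
  have ce4 : ∀ t, MeasurableSet[mTi] t →
      (μ⟦t|(mI0 ⊔ mIi) ⊔ mTn⟧) =ᵐ[μ] μ⟦t|mI0 ⊔ mIi⟧ :=
    fun t ht => aux_ce_of_ci (sup_le hI0' hIi') hTn' hTi' prod3' ht
  -- Step 4: cutting
  have ce5 : ∀ t, MeasurableSet[mTi] t →
      (μ⟦t|(mI0 ⊔ mIi ⊔ mTn) ⊔ mIs⟧) =ᵐ[μ] μ⟦t|mI0 ⊔ mIi⟧ :=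
    fun t ht =>
      (aux_ce_of_ci (sup_le (sup_le hI0' hIi') hTn') hIs' hTi' prodCut ht).trans (ce4 t ht)
  have hEq2 : (mI0 ⊔ mIi ⊔ mTn) ⊔ mIs = (mI0 ⊔ mIs) ⊔ mTn := by
    apply le_antisymm
    · refine sup_le (sup_le (sup_le ?_ ?_) ?_) ?_
      · exact le_sup_of_le_left le_sup_left
      · exact le_sup_of_le_left (hIi_le.trans le_sup_right)
      · exact le_sup_right
      · exact le_sup_of_le_left le_sup_right
    · refine sup_le (sup_le ?_ ?_) ?_
      · exact le_sup_of_le_left (le_sup_of_le_left le_sup_left)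
      · exact le_sup_right
      · exact le_sup_of_le_left le_sup_right
  have ce6 : ∀ t, MeasurableSet[mTi] t →
      (μ⟦t|(mI0 ⊔ mIs) ⊔ mTn⟧) =ᵐ[μ] μ⟦t|mI0 ⊔ mIi⟧ := by
    intro t ht; rw [← hEq2]; exact ce5 t ht
  have ce7 : ∀ t, MeasurableSet[mTi] t →
      (μ⟦t|(mI0 ⊔ mIs) ⊔ mTn⟧) =ᵐ[μ] μ⟦t|mI0 ⊔ mIs⟧ := by
    intro t ht
    have htw := condExp_condExp_of_le (le_sup_left : mI0 ⊔ mIs ≤ (mI0 ⊔ mIs) ⊔ mTn)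
      (sup_le (sup_le hI0' hIs') hTn') (f := t.indicator fun _ => (1:ℝ)) (μ := μ)
    have ht2 : (μ⟦t|mI0 ⊔ mIs⟧) =ᵐ[μ] μ⟦t|mI0 ⊔ mIi⟧ :=
      calc (μ⟦t|mI0 ⊔ mIs⟧)
          =ᵐ[μ] μ[μ⟦t|(mI0 ⊔ mIs) ⊔ mTn⟧|mI0 ⊔ mIs] := htw.symm
        _ =ᵐ[μ] μ[μ⟦t|mI0 ⊔ mIi⟧|mI0 ⊔ mIs] := condExp_congr_ae (ce6 t ht)
        _ =ᵐ[μ] μ⟦t|mI0 ⊔ mIi⟧ := by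
            rw [condExp_of_stronglyMeasurable (sup_le hI0' hIs')
              (stronglyMeasurable_condExp.mono (sup_le_sup_left hIi_le _))
              integrable_condExp]
    exact (ce6 t ht).trans ht2.symm
  have prod8 : ∀ a b, MeasurableSet[mTn] a → MeasurableSet[mTi] b →
      (μ⟦a ∩ b|mI0 ⊔ mIs⟧) =ᵐ[μ] (μ⟦a|mI0 ⊔ mIs⟧) * μ⟦b|mI0 ⊔ mIs⟧ :=
    fun a b ha hb => aux_ci_of_ce (sup_le hI0' hIs') hTn' hTi' ce7 ha hb
  -- Step 5: delegability
  have ceDel : ∀ c, MeasurableSet[mT] c → (μ⟦c|mIp⟧) =ᵐ[μ] μ⟦c|mI0 ⊔ mIs⟧ := by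
    intro c hc
    have h := aux_ce_of_ci (sup_le hI0' hIs') hIp' hT' prodDel hc
    rwa [sup_eq_right.mpr (sup_le hI0_le hIstar_le)] at h
  -- conclusion
  rw [condIndepFun_iff_condIndep, condIndep_iff _ _ _ _ hTi' hTn' μ]
  intro t1 t2 ht1 ht2
  have ht1T : MeasurableSet[mT] t1 := hTi_le _ ht1
  have ht2T : MeasurableSet[mT] t2 := hTn_le _ ht2
  calc (μ⟦t1 ∩ t2|mIp⟧) =ᵐ[μ] μ⟦t1 ∩ t2|mI0 ⊔ mIs⟧ := ceDel _ (ht1T.inter ht2T)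
    _ = μ⟦t2 ∩ t1|mI0 ⊔ mIs⟧ := by rw [Set.inter_comm]
    _ =ᵐ[μ] (μ⟦t2|mI0 ⊔ mIs⟧) * μ⟦t1|mI0 ⊔ mIs⟧ := prod8 t2 t1 ht2 ht1
    _ =ᵐ[μ] (μ⟦t2|mIp⟧) * μ⟦t1|mIp⟧ :=
        Filter.EventuallyEq.mul (ceDel _ ht2T).symm (ceDel _ ht1T).symm
    _ = (μ⟦t1|mIp⟧) * μ⟦t2|mIp⟧ := mul_comm _ _
end

section
/- (Theorem 1 of the paper, distributed updating conclusion.) Let m ≥ 1 and let θ₁, …, θ_m, I₀, I₁₁, …, I_mm, I₊ be random variables on a common probability space, each taking values in a standard Borel space. Write θ_{i⁻} for the tuple (θ_j)_{j≠i} and I_* for the tuple (I₁₁, …, I_mm), and suppose I₀ and I_* are both measurable with respect to σ(I₊). Assume: (delegable) I₊ is conditionally independent of (θ₁, …, θ_m) given (I₀, I_*); for each i ∈ {1,…,m}: (separately informed) I_{ii} is conditionally independent of θ_{i⁻} given (I₀, θ_i); (cutting) I_* is conditionally independent of θ_i given (I₀, I_{ii}, θ_{i⁻}); and (commonly separated)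 θ_i is conditionally independent of θ_{i⁻} given I₀. Then for each i ∈ {1,…,m}, θ_i is conditionally independent of I₊ given the pair (I₀, I_{ii}); that is, when assessing θ_i only the common information I₀ and the panel's own information I_{ii} are relevant. -/
open MeasureTheory ProbabilityTheory MeasurableSpace

section PureAux

variable {Ω : Type*}

private lemma aux_mul_indicator_one (f : Ω → ℝ) (s : Set Ω) :
    (fun x => f x * s.indicator (fun _ => (1:ℝ)) x) = s.indicator f := by
  funext x
  by_cases hx : x ∈ s <;> simp [hx]

private lemma aux_sup_eq_generateFrom (m' m₁ : MeasurableSpace Ω) :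
    m' ⊔ m₁ = MeasurableSpace.generateFrom
      {u : Set Ω | ∃ s t, MeasurableSet[m'] s ∧ MeasurableSet[m₁] t ∧ u = s ∩ t} := by
  refine le_antisymm (sup_le ?_ ?_) (MeasurableSpace.generateFrom_le ?_)
  · intro s hs
    exact MeasurableSpace.measurableSet_generateFrom
      ⟨s, Set.univ, hs, MeasurableSet.univ, (Set.inter_univ s).symm⟩
  · intro t ht
    exact MeasurableSpace.measurableSet_generateFrom
      ⟨Set.univ, t, MeasurableSet.univ, ht, (Set.univ_inter t).symm⟩
  · rintro u ⟨s, t, hs, ht, rfl⟩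
    exact ((le_sup_left : m' ≤ m' ⊔ m₁) s hs).inter ((le_sup_right : m₁ ≤ m' ⊔ m₁) t ht)

private lemma aux_isPiSystem (m' m₁ : MeasurableSpace Ω) :
    IsPiSystem {u : Set Ω | ∃ s t, MeasurableSet[m'] s ∧ MeasurableSet[m₁] t ∧ u = s ∩ t} := by
  rintro u ⟨s, t, hs, ht, rfl⟩ v ⟨s', t', hs', ht', rfl⟩ -
  exact ⟨s ∩ s', t ∩ t', hs.inter hs', ht.inter ht', by rw [Set.inter_inter_inter_comm]⟩

end PureAux

section Aux

variable {Ω : Type*} {m' m₁ m₂ m₃ : MeasurableSpace Ω} {mΩ : MeasurableSpace Ω}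
  [StandardBorelSpace Ω] {μ : Measure Ω} [IsProbabilityMeasure μ]

/-- Tower property: conditional independence implies that conditioning on the extra σ-algebra
does not change the conditional expectation of indicators. -/
private lemma condexp_sup_of_condIndep {hm' : m' ≤ mΩ}
    (hm₁ : m₁ ≤ mΩ) (hm₂ : m₂ ≤ mΩ)
    (h : CondIndep m' m₁ m₂ hm' μ) {t : Set Ω} (ht : MeasurableSet[m₂] t) :
    μ[t.indicator (fun _ => (1:ℝ)) | m' ⊔ m₁] =ᵐ[μ] μ[t.indicator (fun _ => (1:ℝ)) | m'] := by
  rw [condIndep_iff m' m₁ m₂ hm' hm₁ hm₂ μ] at h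
  have hsup : m' ⊔ m₁ ≤ mΩ := sup_le hm' hm₁
  have htm : MeasurableSet[mΩ] t := hm₂ t ht
  have hind : Integrable (t.indicator (fun _ => (1:ℝ))) μ := (integrable_const 1).indicator htm
  refine (ae_eq_condExp_of_forall_setIntegral_eq hsup hind
    (fun s _ _ => integrable_condExp.integrableOn)
    (fun s hs _ => ?_)
    ((stronglyMeasurable_condExp (m := m') (μ := μ) (f := t.indicator (fun _ => (1:ℝ)))).mono
      (le_sup_left : m' ≤ m' ⊔ m₁)).aestronglyMeasurable).symm
  -- prove the set-integral identity by π-λ induction on `m' ⊔ m₁`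
  refine MeasurableSpace.induction_on_inter (m := m' ⊔ m₁)
      (C := fun u _ => ∫ x in u, (μ[t.indicator (fun _ => (1:ℝ)) | m']) x ∂μ
        = ∫ x in u, t.indicator (fun _ => (1:ℝ)) x ∂μ)
      (aux_sup_eq_generateFrom m' m₁) (aux_isPiSystem m' m₁)
      (by simp) ?_ ?_ ?_ s hs
  · rintro u ⟨s', s, hs', hs, rfl⟩
    have hsm : MeasurableSet[mΩ] s := hm₁ s hs
    have hint : Integrable (fun x => (μ[t.indicator (fun _ => (1:ℝ)) | m']) x
        * s.indicator (fun _ => (1:ℝ)) x) μ := by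
      rw [aux_mul_indicator_one]
      exact integrable_condExp.indicator hsm
    have hint2 : Integrable ((s ∩ t).indicator (fun _ => (1:ℝ))) μ :=
      (integrable_const 1).indicator (hsm.inter htm)
    have hpull : μ[(fun x => (μ[t.indicator (fun _ => (1:ℝ)) | m']) x
          * s.indicator (fun _ => (1:ℝ)) x) | m']
        =ᵐ[μ] (μ[t.indicator (fun _ => (1:ℝ)) | m']) * (μ[s.indicator (fun _ => (1:ℝ)) | m']) :=
      condExp_mul_of_stronglyMeasurable_left stronglyMeasurable_condExp hint
        ((integrable_const 1).indicator hsm)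
    have key : (μ⟦s ∩ t | m'⟧)
        =ᵐ[μ] μ[(fun x => (μ[t.indicator (fun _ => (1:ℝ)) | m']) x
          * s.indicator (fun _ => (1:ℝ)) x) | m'] := by
      refine (h s t hs ht).trans ?_
      refine (Filter.EventuallyEq.of_eq (mul_comm _ _)).trans hpull.symm
    calc ∫ x in s' ∩ s, (μ[t.indicator (fun _ => (1:ℝ)) | m']) x ∂μ
        = ∫ x in s', s.indicator (μ[t.indicator (fun _ => (1:ℝ)) | m']) x ∂μ :=
          (setIntegral_indicator hsm).symm
      _ = ∫ x in s', (fun x => (μ[t.indicator (fun _ => (1:ℝ)) | m']) x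
            * s.indicator (fun _ => (1:ℝ)) x) x ∂μ := by rw [aux_mul_indicator_one]
      _ = ∫ x in s', (μ[(fun x => (μ[t.indicator (fun _ => (1:ℝ)) | m']) x
            * s.indicator (fun _ => (1:ℝ)) x) | m']) x ∂μ :=
          (setIntegral_condExp hm' hint hs').symm
      _ = ∫ x in s', (μ⟦s ∩ t | m'⟧) x ∂μ :=
          integral_congr_ae (ae_restrict_of_ae key.symm)
      _ = ∫ x in s', (s ∩ t).indicator (fun _ => (1:ℝ)) x ∂μ :=
          setIntegral_condExp hm' hint2 hs'
      _ = ∫ x in s', s.indicator (t.indicator (fun _ => (1:ℝ))) x ∂μ := by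
          rw [Set.indicator_indicator]
      _ = ∫ x in s' ∩ s, t.indicator (fun _ => (1:ℝ)) x ∂μ := setIntegral_indicator hsm
  · intro u hu ihu
    have hum : MeasurableSet[mΩ] u := hsup u hu
    have h1 := integral_add_compl hum (integrable_condExp :
      Integrable (μ[t.indicator (fun _ => (1:ℝ)) | m']) μ)
    have h2 := integral_add_compl hum hind
    have h3 : ∫ x, (μ[t.indicator (fun _ => (1:ℝ)) | m']) x ∂μ
        = ∫ x, t.indicator (fun _ => (1:ℝ)) x ∂μ := integral_condExp hm'
    linarith
  · intro f hdisj hfm ihf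
    rw [integral_iUnion (fun i => hsup _ (hfm i)) hdisj integrable_condExp.integrableOn,
      integral_iUnion (fun i => hsup _ (hfm i)) hdisj hind.integrableOn]
    exact tsum_congr ihf

/-- Converse of the tower property. -/
private lemma condIndep_of_condexp_sup {hm' : m' ≤ mΩ}
    (hm₁ : m₁ ≤ mΩ) (hm₂ : m₂ ≤ mΩ)
    (h : ∀ t : Set Ω, MeasurableSet[m₂] t →
      μ[t.indicator (fun _ => (1:ℝ)) | m' ⊔ m₁] =ᵐ[μ] μ[t.indicator (fun _ => (1:ℝ)) | m']) :
    CondIndep m' m₁ m₂ hm' μ := by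
  rw [condIndep_iff m' m₁ m₂ hm' hm₁ hm₂ μ]
  intro s t hs ht
  have hsm : MeasurableSet[mΩ] s := hm₁ s hs
  have htm : MeasurableSet[mΩ] t := hm₂ t ht
  have hsup : m' ⊔ m₁ ≤ mΩ := sup_le hm' hm₁
  have h1 : (s ∩ t).indicator (fun _ => (1:ℝ))
      = s.indicator (fun _ => (1:ℝ)) * t.indicator (fun _ => (1:ℝ)) := by
    funext x
    by_cases hx : x ∈ s <;> by_cases hx' : x ∈ t <;>
      simp [hx, hx', Set.indicator_apply, Set.mem_inter_iff]
  have hint : Integrable (s.indicator (fun _ => (1:ℝ)) * t.indicator (fun _ => (1:ℝ))) μ := by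
    rw [← h1]; exact (integrable_const 1).indicator (hsm.inter htm)
  have hindt : Integrable (t.indicator (fun _ => (1:ℝ))) μ := (integrable_const 1).indicator htm
  have hinds : Integrable (s.indicator (fun _ => (1:ℝ))) μ := (integrable_const 1).indicator hsm
  -- pull-out at level m' ⊔ m₁
  have pull1 : μ[(s.indicator (fun _ => (1:ℝ)) * t.indicator (fun _ => (1:ℝ))) | m' ⊔ m₁]
      =ᵐ[μ] s.indicator (fun _ => (1:ℝ)) * μ[t.indicator (fun _ => (1:ℝ)) | m' ⊔ m₁] :=
    condExp_mul_of_stronglyMeasurable_left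
      (((stronglyMeasurable_const (β := ℝ)).indicator hs : StronglyMeasurable[m₁] _).mono
        le_sup_right) hint hindt
  have step1 : μ[(s ∩ t).indicator (fun _ => (1:ℝ)) | m' ⊔ m₁]
      =ᵐ[μ] (fun x => (μ[t.indicator (fun _ => (1:ℝ)) | m']) x
        * s.indicator (fun _ => (1:ℝ)) x) := by
    rw [h1]
    refine pull1.trans ?_
    filter_upwards [h t ht] with x hx
    simp only [Pi.mul_apply, hx, mul_comm]
  have hint2 : Integrable (fun x => (μ[t.indicator (fun _ => (1:ℝ)) | m']) x
      * s.indicator (fun _ => (1:ℝ)) x) μ := by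
    rw [aux_mul_indicator_one]
    exact integrable_condExp.indicator hsm
  have pull2 : μ[(fun x => (μ[t.indicator (fun _ => (1:ℝ)) | m']) x
        * s.indicator (fun _ => (1:ℝ)) x) | m']
      =ᵐ[μ] (μ[t.indicator (fun _ => (1:ℝ)) | m']) * (μ[s.indicator (fun _ => (1:ℝ)) | m']) :=
    condExp_mul_of_stronglyMeasurable_left stronglyMeasurable_condExp hint2 hinds
  calc (μ⟦s ∩ t | m'⟧)
      =ᵐ[μ] μ[(μ[(s ∩ t).indicator (fun _ => (1:ℝ)) | m' ⊔ m₁]) | m'] :=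
        (condExp_condExp_of_le le_sup_left hsup).symm
    _ =ᵐ[μ] μ[(fun x => (μ[t.indicator (fun _ => (1:ℝ)) | m']) x
        * s.indicator (fun _ => (1:ℝ)) x) | m'] := condExp_congr_ae step1
    _ =ᵐ[μ] (μ[t.indicator (fun _ => (1:ℝ)) | m']) * (μ[s.indicator (fun _ => (1:ℝ)) | m']) :=
        pull2
    _ =ᵐ[μ] (μ⟦s | m'⟧) * (μ⟦t | m'⟧) := Filter.EventuallyEq.of_eq (mul_comm _ _)

/-- Contraction graphoid axiom for conditional independence. -/
private lemma condIndep_contraction {hm' : m' ≤ mΩ}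
    (hm₁ : m₁ ≤ mΩ) (hm₂ : m₂ ≤ mΩ) (hm₃ : m₃ ≤ mΩ)
    (h₁ : CondIndep m' m₁ m₂ hm' μ)
    (h₂ : CondIndep (m' ⊔ m₁) m₃ m₂ (sup_le hm' hm₁) μ) :
    CondIndep m' (m₁ ⊔ m₃) m₂ hm' μ := by
  refine condIndep_of_condexp_sup (sup_le hm₁ hm₃) hm₂ (fun t ht => ?_)
  have e : m' ⊔ (m₁ ⊔ m₃) = (m' ⊔ m₁) ⊔ m₃ := (sup_assoc m' m₁ m₃).symm
  calc μ[t.indicator (fun _ => (1:ℝ)) | m' ⊔ (m₁ ⊔ m₃)]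
      = μ[t.indicator (fun _ => (1:ℝ)) | (m' ⊔ m₁) ⊔ m₃] := by rw [e]
    _ =ᵐ[μ] μ[t.indicator (fun _ => (1:ℝ)) | m' ⊔ m₁] :=
        condexp_sup_of_condIndep hm₃ hm₂ h₂ ht
    _ =ᵐ[μ] μ[t.indicator (fun _ => (1:ℝ)) | m'] :=
        condexp_sup_of_condIndep hm₁ hm₂ h₁ ht

/-- Weak union graphoid axiom for conditional independence. -/
private lemma condIndep_weakUnion {hm' : m' ≤ mΩ}
    (hm₁ : m₁ ≤ mΩ) (hm₂ : m₂ ≤ mΩ) (hm₃ : m₃ ≤ mΩ)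
    (h : CondIndep m' (m₁ ⊔ m₃) m₂ hm' μ) :
    CondIndep (m' ⊔ m₁) m₃ m₂ (sup_le hm' hm₁) μ := by
  refine condIndep_of_condexp_sup hm₃ hm₂ (fun t ht => ?_)
  have h' : CondIndep m' m₁ m₂ hm' μ := condIndep_of_condIndep_of_le_left h le_sup_left
  calc μ[t.indicator (fun _ => (1:ℝ)) | (m' ⊔ m₁) ⊔ m₃]
      = μ[t.indicator (fun _ => (1:ℝ)) | m' ⊔ (m₁ ⊔ m₃)] := by rw [sup_assoc]
    _ =ᵐ[μ] μ[t.indicator (fun _ => (1:ℝ)) | m'] :=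
        condexp_sup_of_condIndep (sup_le hm₁ hm₃) hm₂ h ht
    _ =ᵐ[μ] μ[t.indicator (fun _ => (1:ℝ)) | m' ⊔ m₁] :=
        (condexp_sup_of_condIndep hm₁ hm₂ h' ht).symm

/-- Congruence in the middle σ-algebra. -/
private lemma condIndep_congr₁ {n : MeasurableSpace Ω} (e : m₁ = n) {hm' : m' ≤ mΩ}
    (h : CondIndep m' m₁ m₂ hm' μ) : CondIndep m' n m₂ hm' μ := e ▸ h

/-- Congruence in the conditioning σ-algebra. -/
private lemma condIndep_congr' {n : MeasurableSpace Ω} (e : m' = n) (hn : n ≤ mΩ)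
    {hm' : m' ≤ mΩ} (h : CondIndep m' m₁ m₂ hm' μ) : CondIndep n m₁ m₂ hn μ := by
  subst e; exact h

end Aux

/-- **Theorem 1 of the paper (distributed updating conclusion).**
Let `θ 1, …, θ m` be the panel parameter vectors, `I0` the common admissible evidence,
`Iii i` the evidence panel `i` uses for `θ i`, `Istar = (Iii 1, …, Iii m)` and `Iplus` the
totality of admissible evidence, with `I0` and `Istar` measurable with respect to `σ(Iplus)`.
If the IDSS is delegable, separately informed, cutting and commonly separated, then for each
panel `i`, `θ i` is conditionally independent of `Iplus` given the pair `(I0, Iii i)`: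
when assessing `θ i` only the common information and the panel's own information matter. -/
theorem stmt6_theorem1_distributed_updating
    {Ω : Type*} [MeasurableSpace Ω] [StandardBorelSpace Ω] [Nonempty Ω]
    (μ : Measure Ω) [IsProbabilityMeasure μ]
    {m : ℕ} (hm : 1 ≤ m)
    {α : Fin m → Type*} [∀ i, MeasurableSpace (α i)] [∀ i, StandardBorelSpace (α i)]
    {β : Type*} [MeasurableSpace β] [StandardBorelSpace β]
    {γ : Fin m → Type*} [∀ i, MeasurableSpace (γ i)] [∀ i, StandardBorelSpace (γ i)]
    {δ : Type*} [MeasurableSpace δ] [StandardBorelSpace δ]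
    {θ : ∀ i, Ω → α i} {I0 : Ω → β} {Iii : ∀ i, Ω → γ i} {Iplus : Ω → δ}
    (hθ : ∀ i, Measurable (θ i)) (hI0 : Measurable I0)
    (hIii : ∀ i, Measurable (Iii i)) (hIplus : Measurable Iplus)
    -- `I0` and `Istar = (Iii i)_{i}` are measurable with respect to `σ(Iplus)`
    (hI0_le : MeasurableSpace.comap I0 inferInstance ≤
      MeasurableSpace.comap Iplus inferInstance)
    (hIstar_le : MeasurableSpace.comap (fun ω (i : Fin m) => Iii i ω) inferInstance ≤
      MeasurableSpace.comap Iplus inferInstance)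
    -- delegable: `Iplus ⫫ (θ 1, …, θ m) | (I0, Istar)`
    (delegable : CondIndepFun
        (MeasurableSpace.comap I0 inferInstance ⊔
          MeasurableSpace.comap (fun ω (i : Fin m) => Iii i ω) inferInstance)
        (sup_le hI0.comap_le
          (measurable_pi_lambda _ fun i => hIii i).comap_le)
        Iplus (fun ω (i : Fin m) => θ i ω) μ)
    -- separately informed: `Iii i ⫫ θ_{i⁻} | (I0, θ i)`
    (sepInf : ∀ i, CondIndepFun
        (MeasurableSpace.comap I0 inferInstance ⊔
          MeasurableSpace.comap (θ i) inferInstance)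
        (sup_le hI0.comap_le (hθ i).comap_le)
        (Iii i) (fun ω (j : {j : Fin m // j ≠ i}) => θ j.1 ω) μ)
    -- cutting: `Istar ⫫ θ i | (I0, Iii i, θ_{i⁻})`
    (cutting : ∀ i, CondIndepFun
        (MeasurableSpace.comap I0 inferInstance ⊔
          MeasurableSpace.comap (Iii i) inferInstance ⊔
          MeasurableSpace.comap (fun ω (j : {j : Fin m // j ≠ i}) => θ j.1 ω) inferInstance)
        (sup_le (sup_le hI0.comap_le (hIii i).comap_le)
          (measurable_pi_lambda _ fun j => hθ j.1).comap_le)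
        (fun ω (i : Fin m) => Iii i ω) (θ i) μ)
    -- commonly separated: `θ i ⫫ θ_{i⁻} | I0`
    (commonSep : ∀ i, CondIndepFun
        (MeasurableSpace.comap I0 inferInstance) hI0.comap_le
        (θ i) (fun ω (j : {j : Fin m // j ≠ i}) => θ j.1 ω) μ) :
    ∀ i, CondIndepFun
        (MeasurableSpace.comap I0 inferInstance ⊔
          MeasurableSpace.comap (Iii i) inferInstance)
        (sup_le hI0.comap_le (hIii i).comap_le)
        (θ i) Iplus μ := by
  intro i
  -- translate everything to conditional independence of σ-algebras
  have hdel := (condIndepFun_iff_condIndep _ _ _ _ μ).mp delegable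
  have hsep := (condIndepFun_iff_condIndep _ _ _ _ μ).mp (sepInf i)
  have hcut := (condIndepFun_iff_condIndep _ _ _ _ μ).mp (cutting i)
  have hcs := (condIndepFun_iff_condIndep _ _ _ _ μ).mp (commonSep i)
  rw [condIndepFun_iff_condIndep]
  -- measurability facts
  have hA : MeasurableSpace.comap I0 inferInstance ≤ _ := hI0.comap_le
  have hBi : MeasurableSpace.comap (Iii i) inferInstance ≤ _ := (hIii i).comap_le
  have hS : MeasurableSpace.comap (fun ω (j : Fin m) => Iii j ω) inferInstance ≤ _ :=
    (measurable_pi_lambda _ fun j => hIii j).comap_le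
  have hTi : MeasurableSpace.comap (θ i) inferInstance ≤ _ := (hθ i).comap_le
  have hTm : MeasurableSpace.comap (fun ω (j : {j : Fin m // j ≠ i}) => θ j.1 ω)
      inferInstance ≤ _ := (measurable_pi_lambda _ fun j => hθ j.1).comap_le
  have hD : MeasurableSpace.comap Iplus inferInstance ≤ _ := hIplus.comap_le
  -- `σ(Iii i) ≤ σ(Istar)` and `σ(θ i) ≤ σ(θ)`
  have hBiS : MeasurableSpace.comap (Iii i) inferInstance ≤
      MeasurableSpace.comap (fun ω (j : Fin m) => Iii j ω) inferInstance := by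
    calc MeasurableSpace.comap (Iii i) inferInstance
        = ((inferInstance : MeasurableSpace (γ i)).comap (fun f : ∀ j, γ j => f i)).comap
            (fun ω (j : Fin m) => Iii j ω) := by
              exact (MeasurableSpace.comap_comp (f := fun f : ∀ j, γ j => f i)
                (g := fun ω (j : Fin m) => Iii j ω)).symm
      _ ≤ _ := MeasurableSpace.comap_mono (measurable_pi_apply i).comap_le
  have hTiTh : MeasurableSpace.comap (θ i) inferInstance ≤
      MeasurableSpace.comap (fun ω (j : Fin m) => θ j ω) inferInstance := by
    calc MeasurableSpace.comap (θ i) inferInstance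
        = ((inferInstance : MeasurableSpace (α i)).comap (fun f : ∀ j, α j => f i)).comap
            (fun ω (j : Fin m) => θ j ω) := by
              exact (MeasurableSpace.comap_comp (f := fun f : ∀ j, α j => f i)
                (g := fun ω (j : Fin m) => θ j ω)).symm
      _ ≤ _ := MeasurableSpace.comap_mono (measurable_pi_apply i).comap_le
  -- Step 1: `θ_{i⁻} ⫫ θ i | (I0, Iii i)`
  have step0 := condIndep_contraction hTi hTm hBi hcs hsep
  have step1 := condIndep_weakUnion hBi hTm hTi (condIndep_congr₁ (sup_comm _ _) step0)
  -- Step 2: `Istar ⫫ θ i | (I0, Iii i)`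
  have step2a := condIndep_contraction hTm hTi hS step1.symm hcut
  have step2 := condIndep_of_condIndep_of_le_left step2a le_sup_right
  -- Step 3: contract with delegability
  have hdelTi := condIndep_of_condIndep_of_le_right hdel hTiTh
  have e : MeasurableSpace.comap I0 inferInstance ⊔
      MeasurableSpace.comap (fun ω (j : Fin m) => Iii j ω) inferInstance
      = (MeasurableSpace.comap I0 inferInstance ⊔ MeasurableSpace.comap (Iii i) inferInstance) ⊔
        MeasurableSpace.comap (fun ω (j : Fin m) => Iii j ω) inferInstance := by
    rw [sup_assoc, sup_eq_right.mpr hBiS]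
  have hdel' := condIndep_congr' e (sup_le (sup_le hA hBi) hS) hdelTi
  have step3 := condIndep_contraction hS hTi hD step2 hdel'
  exact (condIndep_of_condIndep_of_le_left step3 le_sup_right).symm
end
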